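/- Let K be a Markov kernel on X such that there exist ε ∈ (0,1] and a probability measure ν on X with K(x, A) ≥ ε ν(A) for every x ∈ X and every measurable A. Then for any two probability measures λ₁, λ₂ on X, ‖λ₁K − λ₂K‖_TV ≤ (1 − ε) ‖λ₁ − λ₂‖_TV. -/

import Mathlib

/-!
Applying the minorization to `A` and to `Aᶜ` shows that `x ↦ K(x, A)` takes values in
`[ε ν(A), ε ν(A) + 1 - ε]`. The common part `ε ν(A)` cancels in `λ₁K(A) - λ₂K(A)`, and a function
with values in `[0, 1 - ε]` integrates against `λ₁ - λ₂` to at most `1 - ε` times the mass of the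
positive part of `λ₁ - λ₂` (Hahn decomposition), which is at most `‖λ₁ − λ₂‖_TV`.
-/

open MeasureTheory ProbabilityTheory
open scoped ENNReal

/-- Total variation distance between two measures:
`‖μ − ν‖_TV = sup_{A measurable} |μ(A) − ν(A)|`. -/
noncomputable def tvDist {X : Type*} [MeasurableSpace X] (μ ν : Measure X) : ℝ :=
  ⨆ A : {A : Set X // MeasurableSet A}, |(μ A.1).toReal - (ν A.1).toReal|

namespace MeasureTheory

variable {X : Type*} [MeasurableSpace X]

theorem tvDist_comm (μ ν : Measure X) : tvDist μ ν = tvDist ν μ := by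
  simp only [tvDist, abs_sub_comm]

theorem toReal_sub_toReal_le_tvDist (μ ν : Measure X) [IsFiniteMeasure μ] [IsFiniteMeasure ν]
    {s : Set X} (hs : MeasurableSet s) :
    (μ s).toReal - (ν s).toReal ≤ tvDist μ ν := by
  have hbdd : BddAbove (Set.range fun A : {A : Set X // MeasurableSet A} =>
      |(μ A.1).toReal - (ν A.1).toReal|) := by
    refine ⟨(μ Set.univ).toReal + (ν Set.univ).toReal, ?_⟩
    rintro _ ⟨A, rfl⟩
    have hμ := ENNReal.toReal_mono (measure_ne_top μ _) (measure_mono (Set.subset_univ A))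
    have hν := ENNReal.toReal_mono (measure_ne_top ν _) (measure_mono (Set.subset_univ A))
    rw [abs_le]
    constructor <;> linarith [ENNReal.toReal_nonneg (a := μ A), ENNReal.toReal_nonneg (a := ν A)]
  exact (le_abs_self _).trans (le_ciSup hbdd ⟨s, hs⟩)

theorem lintegral_le_lintegral_add_mul_of_isHahnDecomposition {μ ν : Measure X}
    [IsFiniteMeasure ν] {s : Set X} (hs : IsHahnDecomposition ν μ s) {f : X → ℝ≥0∞}
    {c : ℝ≥0∞} (hfc : ∀ x, f x ≤ c) :
    ∫⁻ x, f x ∂μ ≤ ∫⁻ x, f x ∂ν + c * (μ s - ν s) := by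
  have hpos : ∫⁻ x in s, f x ∂μ ≤ ∫⁻ x in s, f x ∂ν + c * (μ s - ν s) := by
    calc ∫⁻ x in s, f x ∂μ
        = ∫⁻ x, f x ∂(μ.restrict s - ν.restrict s) + ∫⁻ x in s, f x ∂ν := by
          rw [← lintegral_add_measure, Measure.sub_add_cancel_of_le hs.le_on]
      _ ≤ ∫⁻ _, c ∂(μ.restrict s - ν.restrict s) + ∫⁻ x in s, f x ∂ν := by
          gcongr with x; exact hfc x
      _ = ∫⁻ x in s, f x ∂ν + c * (μ s - ν s) := by
          rw [lintegral_const, Measure.sub_apply MeasurableSet.univ hs.le_on,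
            Measure.restrict_apply_univ, Measure.restrict_apply_univ, add_comm]
  have hneg : ∫⁻ x in sᶜ, f x ∂μ ≤ ∫⁻ x in sᶜ, f x ∂ν := lintegral_mono' hs.ge_on_compl le_rfl
  calc ∫⁻ x, f x ∂μ = ∫⁻ x in s, f x ∂μ + ∫⁻ x in sᶜ, f x ∂μ :=
        (lintegral_add_compl f hs.measurableSet).symm
    _ ≤ ∫⁻ x in s, f x ∂ν + c * (μ s - ν s) + ∫⁻ x in sᶜ, f x ∂ν := add_le_add hpos hneg
    _ = ∫⁻ x, f x ∂ν + c * (μ s - ν s) := by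
        rw [add_right_comm, lintegral_add_compl f hs.measurableSet]

theorem toReal_lintegral_sub_le_mul_tvDist (μ ν : Measure X) [IsFiniteMeasure μ]
    [IsFiniteMeasure ν] {f : X → ℝ≥0∞} {c : ℝ≥0∞} (hc : c ≠ ∞) (hfc : ∀ x, f x ≤ c) :
    (∫⁻ x, f x ∂μ).toReal - (∫⁻ x, f x ∂ν).toReal ≤ c.toReal * tvDist μ ν := by
  obtain ⟨s, hs⟩ := exists_isHahnDecomposition ν μ
  have hνs : ν s ≤ μ s := by
    simpa using Measure.le_iff'.1 hs.le_on Set.univ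
  have hfin : ∀ ρ : Measure X, [IsFiniteMeasure ρ] → ∫⁻ x, f x ∂ρ ≠ ∞ := fun ρ _ =>
    ne_top_of_le_ne_top (ENNReal.mul_ne_top hc (measure_ne_top ρ _))
      ((lintegral_mono hfc).trans_eq (lintegral_const c))
  have hcs : c * (μ s - ν s) ≠ ∞ := ENNReal.mul_ne_top hc (by finiteness)
  have key := ENNReal.toReal_mono (ENNReal.add_ne_top.2 ⟨hfin ν, hcs⟩)
    (lintegral_le_lintegral_add_mul_of_isHahnDecomposition hs hfc)
  rw [ENNReal.toReal_add (hfin ν) hcs, ENNReal.toReal_mul,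
    ENNReal.toReal_sub_of_le hνs (measure_ne_top μ s)] at key
  linarith [mul_le_mul_of_nonneg_left (toReal_sub_toReal_le_tvDist μ ν hs.measurableSet)
    (ENNReal.toReal_nonneg (a := c))]

theorem toReal_lintegral_sub_le_mul_tvDist_of_le_of_le_add (μ ν : Measure X)
    [IsProbabilityMeasure μ] [IsProbabilityMeasure ν] {f : X → ℝ≥0∞} {a c : ℝ≥0∞}
    (ha : a ≠ ∞) (hc : c ≠ ∞) (haf : ∀ x, a ≤ f x) (hfc : ∀ x, f x ≤ a + c) :
    (∫⁻ x, f x ∂μ).toReal - (∫⁻ x, f x ∂ν).toReal ≤ c.toReal * tvDist μ ν := by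
  have hfin : ∀ ρ : Measure X, [IsProbabilityMeasure ρ] → ∫⁻ x, f x - a ∂ρ ≠ ∞ := fun ρ _ =>
    ne_top_of_le_ne_top hc (lintegral_le_const (Filter.Eventually.of_forall fun x =>
      tsub_le_iff_left.2 (hfc x)))
  have hsplit : ∀ ρ : Measure X, [IsProbabilityMeasure ρ] →
      (∫⁻ x, f x ∂ρ).toReal = a.toReal + (∫⁻ x, f x - a ∂ρ).toReal := fun ρ _ => by
    rw [← ENNReal.toReal_add ha (hfin ρ)]
    congr 1
    calc ∫⁻ x, f x ∂ρ = ∫⁻ x, a + (f x - a) ∂ρ := by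
          simp only [add_tsub_cancel_of_le (haf _)]
      _ = a + ∫⁻ x, f x - a ∂ρ := by
          rw [lintegral_add_left measurable_const, lintegral_const, measure_univ, mul_one]
  rw [hsplit μ, hsplit ν, add_sub_add_left_eq_sub]
  exact toReal_lintegral_sub_le_mul_tvDist μ ν hc fun x => tsub_le_iff_left.2 (hfc x)

end MeasureTheory

namespace ProbabilityTheory.Kernel

variable {X : Type*} [MeasurableSpace X]

theorem apply_le_add_of_minorization {K : Kernel X X} [IsMarkovKernel K] {ε : ℝ}
    {ν : Measure X} [IsProbabilityMeasure ν]
    (hmin : ∀ x : X, ∀ A : Set X, MeasurableSet A → ENNReal.ofReal ε * ν A ≤ K x A)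
    (x : X) {A : Set X} (hA : MeasurableSet A) :
    K x A ≤ ENNReal.ofReal ε * ν A + ENNReal.ofReal (1 - ε) := by
  refine ENNReal.le_of_add_le_add_right (a := ENNReal.ofReal ε * ν Aᶜ) (by finiteness) ?_
  calc K x A + ENNReal.ofReal ε * ν Aᶜ ≤ K x A + K x Aᶜ := by gcongr; exact hmin x Aᶜ hA.compl
    _ = ENNReal.ofReal (1 - ε + ε) := by rw [prob_add_prob_compl hA]; simp
    _ ≤ ENNReal.ofReal (1 - ε) + ENNReal.ofReal ε * (ν A + ν Aᶜ) := by
        rw [prob_add_prob_compl hA, mul_one]; exact ENNReal.ofReal_add_le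
    _ = ENNReal.ofReal ε * ν A + ENNReal.ofReal (1 - ε) + ENNReal.ofReal ε * ν Aᶜ := by ring

theorem toReal_bind_apply_sub_le_of_minorization {K : Kernel X X} [IsMarkovKernel K]
    {ε : ℝ} (hε1 : ε ≤ 1) {ν : Measure X} [IsProbabilityMeasure ν]
    (hmin : ∀ x : X, ∀ A : Set X, MeasurableSet A → ENNReal.ofReal ε * ν A ≤ K x A)
    (μ₁ μ₂ : Measure X) [IsProbabilityMeasure μ₁] [IsProbabilityMeasure μ₂]
    {A : Set X} (hA : MeasurableSet A) :
    ((μ₁.bind (fun x => K x)) A).toReal - ((μ₂.bind (fun x => K x)) A).toReal ≤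
      (1 - ε) * tvDist μ₁ μ₂ := by
  simp only [Measure.bind_apply hA K.measurable.aemeasurable]
  simpa only [ENNReal.toReal_ofReal (sub_nonneg.2 hε1)] using
    toReal_lintegral_sub_le_mul_tvDist_of_le_of_le_add μ₁ μ₂ (f := fun x => K x A)
      (by finiteness) ENNReal.ofReal_ne_top (hmin · A hA) (apply_le_add_of_minorization hmin · hA)

end ProbabilityTheory.Kernel

theorem tv_contraction_of_minorized_kernel
    {X : Type*} [MeasurableSpace X]
    (K : Kernel X X) [IsMarkovKernel K]
    (ε : ℝ) (hε1 : ε ≤ 1)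
    (ν : Measure X) [IsProbabilityMeasure ν]
    (hmin : ∀ x : X, ∀ A : Set X, MeasurableSet A → ENNReal.ofReal ε * ν A ≤ K x A)
    (lam₁ lam₂ : Measure X) [IsProbabilityMeasure lam₁] [IsProbabilityMeasure lam₂] :
    tvDist (lam₁.bind (fun x => K x)) (lam₂.bind (fun x => K x)) ≤
      (1 - ε) * tvDist lam₁ lam₂ :=
  ciSup_le fun ⟨_, hA⟩ => abs_sub_le_iff.2
    ⟨K.toReal_bind_apply_sub_le_of_minorization hε1 hmin lam₁ lam₂ hA,
      tvDist_comm lam₁ lam₂ ▸ K.toReal_bind_apply_sub_le_of_minorization hε1 hmin lam₂ lam₁ hA⟩
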